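/- For the simple Hamiltonian H(Q,P) = P²/2 + a₁ Q^{α₁} on Q > 0 with a₁ > 0 and α₁ > 2, the orbit average 𝒜(P²)(η) of P² over a level set of energy η equals η · 2α₁/(α₁+2); i.e., (∫₀^{Q₊} ϱ(Q)dQ)/(∫₀^{Q₊} ϱ(Q)^{-1}dQ) = η·2α₁/(α₁+2), where ϱ(Q) = √(2(η − a₁Q^{α₁})) and Q₊ = (η/a₁)^{1/α₁}. -/

import Mathlib

/-!
Writing `ϱ` for the momentum on the level set, `ϱ² = 2(η - a Q^α)` gives
`d/dQ (Q ϱ) = ϱ - α a Q^α / ϱ = (1 + α/2) ϱ - α η / ϱ`.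
Since `Q ϱ` vanishes at both ends of `[0, Q₊]`, integrating yields the virial identity
`(α + 2) ∫ ϱ = 2 α η ∫ 1/ϱ`. Both integrals converge: `1/ϱ` is integrable near `Q₊`
because `ϱ² ≥ c (Q₊ - Q)` for some `c > 0` when `α ≥ 1`.
-/

open intervalIntegral Real Set MeasureTheory

theorem mul_sub_le_rpow_sub_rpow {α b Q : ℝ} (hα : 1 ≤ α) (hQ : 0 ≤ Q) (hQb : Q ≤ b) :
    b ^ (α - 1) * (b - Q) ≤ b ^ α - Q ^ α := by
  have split : ∀ x : ℝ, 0 ≤ x → x ^ α = x ^ (α - 1) * x := fun x hx => by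
    simpa using rpow_add' hx (y := α - 1) (z := 1) (by linarith)
  rw [split b (hQ.trans hQb), split Q hQ]
  nlinarith [rpow_le_rpow hQ hQb (by linarith : 0 ≤ α - 1)]

theorem intervalIntegrable_inv_sqrt_of_mul_sub_le {f : ℝ → ℝ} {a b c : ℝ} (hab : a ≤ b)
    (hc : 0 < c) (hf : Measurable f) (hle : ∀ x ∈ Ioo a b, c * (b - x) ≤ f x) :
    IntervalIntegrable (fun x => (√(f x))⁻¹) volume a b := by
  have hmajorant :
      IntervalIntegrable (fun x => (√c)⁻¹ * (b - x) ^ (-(1 / 2) : ℝ)) volume a b := by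
    simpa using ((intervalIntegrable_rpow' (a := b - a) (b := 0)
      (by norm_num : (-1 : ℝ) < -(1 / 2))).comp_sub_left b).const_mul (√c)⁻¹
  rw [intervalIntegrable_iff_integrableOn_Ioo_of_le hab] at hmajorant ⊢
  refine hmajorant.mono' (hf.sqrt.inv).aestronglyMeasurable
    (ae_restrict_of_forall_mem measurableSet_Ioo fun x hx => ?_)
  have hbx : 0 < b - x := sub_pos.2 hx.2
  calc ‖(√(f x))⁻¹‖ = (√(f x))⁻¹ := norm_of_nonneg (by positivity)
    _ ≤ (√(c * (b - x)))⁻¹ := inv_anti₀ (by positivity) (sqrt_le_sqrt (hle x hx))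
    _ = (√c)⁻¹ * (b - x) ^ (-(1 / 2) : ℝ) := by
      rw [sqrt_mul hc.le, mul_inv, rpow_neg hbx.le, ← sqrt_eq_rpow]

/-- The momentum `ϱ(Q) = P` on the level set `H(Q, P) = η` of `H = P²/2 + a Q^α`. -/
noncomputable def momentum (a α η Q : ℝ) : ℝ := √(2 * (η - a * Q ^ α))

noncomputable def turningPoint (a α η : ℝ) : ℝ := (η / a) ^ (1 / α)

section

variable {a α η : ℝ}

theorem mul_turningPoint_rpow (ha : 0 < a) (hα : α ≠ 0) (hη : 0 ≤ η) :
    a * turningPoint a α η ^ α = η := by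
  rw [turningPoint, one_div, rpow_inv_rpow (div_nonneg hη ha.le) hα, mul_div_cancel₀ _ ha.ne']

theorem turningPoint_pos (ha : 0 < a) (hη : 0 < η) : 0 < turningPoint a α η :=
  rpow_pos_of_pos (div_pos hη ha) _

theorem momentum_turningPoint (ha : 0 < a) (hα : α ≠ 0) (hη : 0 ≤ η) :
    momentum a α η (turningPoint a α η) = 0 := by
  simp [momentum, mul_turningPoint_rpow ha hα hη]

theorem momentum_pos (ha : 0 < a) (hα : 0 < α) (hη : 0 ≤ η) {Q : ℝ} (hQ : 0 ≤ Q)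
    (hQb : Q < turningPoint a α η) : 0 < momentum a α η Q := by
  have := mul_lt_mul_of_pos_left (rpow_lt_rpow hQ hQb hα) ha
  rw [mul_turningPoint_rpow ha hα.ne' hη] at this
  exact sqrt_pos.2 (by linarith)

theorem continuous_momentum (hα : 0 ≤ α) : Continuous (momentum a α η) := by
  unfold momentum
  fun_prop (disch := exact fun _ => Or.inr hα)

theorem sq_momentum {Q : ℝ} (hm : 0 < momentum a α η Q) :
    momentum a α η Q ^ 2 = 2 * (η - a * Q ^ α) :=
  sq_sqrt (sqrt_pos.1 hm).le

theorem hasDerivAt_momentum {Q : ℝ} (hQ : 0 < Q) (hm : 0 < momentum a α η Q) :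
    HasDerivAt (momentum a α η) (-(a * α * Q ^ (α - 1)) / momentum a α η Q) Q := by
  show HasDerivAt (fun y => √(2 * (η - a * y ^ α))) _ Q
  convert (((hasDerivAt_rpow_const (p := α) (Or.inl hQ.ne')).const_mul a
    |>.const_sub η).const_mul 2).sqrt (sqrt_pos.1 hm).ne' using 1
  unfold momentum
  field_simp

theorem hasDerivAt_mul_momentum {Q : ℝ} (hQ : 0 < Q) (hm : 0 < momentum a α η Q) :
    HasDerivAt (fun Q => Q * momentum a α η Q)
      ((1 + α / 2) * momentum a α η Q - α * η * (momentum a α η Q)⁻¹) Q := by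
  refine ((hasDerivAt_id' Q).fun_mul (hasDerivAt_momentum hQ hm)).congr_deriv ?_
  have hQα : Q * Q ^ (α - 1) = Q ^ α := by
    rw [mul_comm, rpow_sub_one hQ.ne', div_mul_cancel₀ _ hQ.ne']
  field_simp
  linear_combination -(α * sq_momentum hm) - 2 * α * a * hQα

theorem intervalIntegrable_inv_momentum (ha : 0 < a) (hα : 1 ≤ α) (hη : 0 < η) :
    IntervalIntegrable (fun Q => (momentum a α η Q)⁻¹) volume 0 (turningPoint a α η) := by
  have hb := turningPoint_pos (α := α) ha hη
  have hab := mul_turningPoint_rpow ha (by linarith : α ≠ 0) hη.le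
  refine intervalIntegrable_inv_sqrt_of_mul_sub_le (f := fun Q => 2 * (η - a * Q ^ α)) hb.le
    (c := 2 * a * turningPoint a α η ^ (α - 1)) (by positivity) (by fun_prop) fun Q hQ => ?_
  have := mul_le_mul_of_nonneg_left (mul_sub_le_rpow_sub_rpow hα hQ.1.le hQ.2.le) ha.le
  linarith

theorem intervalIntegrable_momentum (hα : 0 ≤ α) (u v : ℝ) :
    IntervalIntegrable (momentum a α η) volume u v :=
  (continuous_momentum hα).intervalIntegrable u v

theorem integral_inv_momentum_pos (ha : 0 < a) (hα : 1 ≤ α) (hη : 0 < η) :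
    0 < ∫ Q in 0..turningPoint a α η, (momentum a α η Q)⁻¹ :=
  intervalIntegral_pos_of_pos_on (intervalIntegrable_inv_momentum ha hα hη)
    (fun _ hQ => inv_pos.2 (momentum_pos ha (by linarith) hη.le hQ.1.le hQ.2))
    (turningPoint_pos ha hη)

theorem virial_momentum (ha : 0 < a) (hα : 1 ≤ α) (hη : 0 < η) :
    (α + 2) * ∫ Q in 0..turningPoint a α η, momentum a α η Q =
      2 * α * η * ∫ Q in 0..turningPoint a α η, (momentum a α η Q)⁻¹ := by
  have hα0 : 0 < α := by linarith
  have hb := turningPoint_pos (α := α) ha hη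
  have hFTC := integral_eq_sub_of_hasDerivAt_of_le (f := fun Q => Q * momentum a α η Q) hb.le
    (continuous_id.mul (continuous_momentum hα0.le)).continuousOn
    (fun Q hQ => hasDerivAt_mul_momentum hQ.1 (momentum_pos ha hα0 hη.le hQ.1.le hQ.2))
    (((intervalIntegrable_momentum hα0.le _ _).const_mul _).sub
      ((intervalIntegrable_inv_momentum ha hα hη).const_mul _))
  rw [integral_sub ((intervalIntegrable_momentum hα0.le _ _).const_mul _)
      ((intervalIntegrable_inv_momentum ha hα hη).const_mul _),
    intervalIntegral.integral_const_mul, intervalIntegral.integral_const_mul,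
    momentum_turningPoint ha hα0.ne' hη.le, mul_zero, zero_mul, sub_zero] at hFTC
  linarith

end

/-- For the simple Hamiltonian `H(Q,P) = P²/2 + a₁ Q^{α₁}` on `Q > 0` with
`a₁ > 0` and `α₁ > 2`, the orbit average of `P²` over the level set of energy
`η` equals `η · 2α₁/(α₁+2)`. -/
theorem orbit_average_Psq (a₁ α₁ η : ℝ) (ha : 0 < a₁) (hα : 2 < α₁) (hη : 0 < η) :
    (∫ Q in (0:ℝ)..((η / a₁) ^ (1/α₁)), Real.sqrt (2 * (η - a₁ * Q ^ α₁))) /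
      (∫ Q in (0:ℝ)..((η / a₁) ^ (1/α₁)), (Real.sqrt (2 * (η - a₁ * Q ^ α₁)))⁻¹) =
    η * (2 * α₁ / (α₁ + 2)) := by
  have hvirial := virial_momentum ha (by linarith : 1 ≤ α₁) hη
  have hpos := integral_inv_momentum_pos ha (by linarith : 1 ≤ α₁) hη
  simp only [momentum, turningPoint] at hvirial hpos
  rw [div_eq_iff hpos.ne', mul_div_assoc', div_mul_eq_mul_div, eq_div_iff (by positivity)]
  linear_combination hvirial
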